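/- arXiv:2112.06210 — 2 statements merged into one kernel-verified Lean document; each statement's English description precedes it below -/
import Mathlib

section
/- For k ≥ 0, μ ∈ L'/L, τ, w ∈ ℍ, the summand of the bivariate theta function satisfies the bound |n^k · erf(−i√(πi(w−τ)) n) · e^{πi n² τ}| ≤ 2|w−τ|^{1/2} · n^{k+1} · e^{−π n² min(Im τ, Im w)} for n > 0; consequently the series Θ̂_{k,μ}(τ,w) = Σ_{n ∈ L+μ} n^k erf(−i√(πi(w−τ)) n) e^{πi n² τ} converges absolutely. -/
open Complex MeasureTheory

/-- The error function `erf(z) = (2/√π) ∫₀^z e^{-t²} dt`, extended to complex arguments. -/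
noncomputable def cerf (z : ℂ) : ℂ :=
  (2 / Real.sqrt Real.pi) * z * ∫ t in (0 : ℝ)..1, Complex.exp (-((t : ℂ) * z) ^ 2)

/-- The summand of the bivariate theta function `Θ̂_{k,μ}(τ,w)` at `n`. -/
noncomputable def ThetaHatSummand (k : ℕ) (τ w : ℂ) (n : ℝ) : ℂ :=
  (n : ℂ) ^ k * cerf (-Complex.I * (Real.pi * Complex.I * (w - τ)) ^ ((1 : ℂ) / 2) * n) *
    Complex.exp (Real.pi * Complex.I * (n : ℂ) ^ 2 * τ)

/-!
Since `erf z = (2/√π) z ∫₀¹ e^{-t²z²} dt`, for `z = -i √c n` the integrand has modulus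
`e^{t² n² Re c} ≤ e^{n² max(0, Re c)}`. With `c = πi(w - τ)` one has `|√c| = √π |w - τ|^{1/2}` and
`Re c = π (Im τ - Im w)`, so the factor `|e^{πi n² τ}| = e^{-π n² Im τ}` turns the growth of
the error function into the decay `e^{-π n² min(Im τ, Im w)}`. Along the shifted lattice
`n = √M m + μ` this Gaussian decay is dominated by the standard majorant of the Jacobi theta series.
-/

open scoped Real

lemma norm_cerf_le (z : ℂ) :
    ‖cerf z‖ ≤ 2 / √π * ‖z‖ * Real.exp (max 0 (-(z ^ 2).re)) := by
  have hintegrand : ∀ t ∈ Set.uIoc (0 : ℝ) 1,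
      ‖Complex.exp (-((t : ℂ) * z) ^ 2)‖ ≤ Real.exp (max 0 (-(z ^ 2).re)) := by
    intro t ht
    rw [Set.uIoc_of_le zero_le_one] at ht
    have ht2 : t ^ 2 ≤ 1 := pow_le_one₀ ht.1.le ht.2
    rw [norm_exp, neg_re, mul_pow, ← ofReal_pow, re_ofReal_mul, ← mul_neg, Real.exp_le_exp]
    calc t ^ 2 * -(z ^ 2).re ≤ t ^ 2 * max 0 (-(z ^ 2).re) :=
          mul_le_mul_of_nonneg_left (le_max_right _ _) (sq_nonneg t)
      _ ≤ max 0 (-(z ^ 2).re) := mul_le_of_le_one_left (le_max_left _ _) ht2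
  have hintegral := intervalIntegral.norm_integral_le_of_norm_le_const hintegrand
  rw [sub_zero, abs_one, mul_one] at hintegral
  have hconst : ‖(2 / √π : ℂ)‖ = 2 / √π := by
    rw [norm_div, Complex.norm_ofNat, norm_real, Real.norm_of_nonneg (Real.sqrt_nonneg _)]
  rw [cerf, norm_mul, norm_mul, hconst]
  gcongr

lemma norm_cerf_neg_I_mul_sqrt_mul_le (c : ℂ) (x : ℝ) :
    ‖cerf (-I * c ^ ((1 : ℂ) / 2) * x)‖ ≤
      2 / √π * ‖c‖ ^ ((1 : ℝ) / 2) * |x| * Real.exp (x ^ 2 * max 0 c.re) := by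
  have hsq : (-I * c ^ ((1 : ℂ) / 2) * x) ^ 2 = -((x ^ 2 : ℝ) * c) := by
    rw [mul_pow, mul_pow, neg_pow, I_sq, one_div, cpow_ofNat_inv_pow]
    push_cast; ring
  have hnorm : ‖-I * c ^ ((1 : ℂ) / 2) * x‖ = ‖c‖ ^ ((1 : ℝ) / 2) * |x| := by
    rw [norm_mul, norm_mul, norm_neg, norm_I, one_mul, norm_real, Real.norm_eq_abs,
      ← norm_cpow_real]
    norm_num
  have hexp : max 0 (-((-I * c ^ ((1 : ℂ) / 2) * x) ^ 2).re) = x ^ 2 * max 0 c.re := by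
    rw [hsq, neg_re, neg_neg, re_ofReal_mul, mul_max_of_nonneg _ _ (sq_nonneg x), mul_zero]
  have := norm_cerf_le (-I * c ^ ((1 : ℂ) / 2) * x)
  rwa [hnorm, hexp, ← mul_assoc] at this

lemma norm_exp_pi_I_mul_sq_mul (x : ℝ) (τ : ℂ) :
    ‖Complex.exp (π * I * (x : ℂ) ^ 2 * τ)‖ = Real.exp (-π * x ^ 2 * τ.im) := by
  have : π * I * (x : ℂ) ^ 2 * τ = ((π * x ^ 2 : ℝ) : ℂ) * (I * τ) := by push_cast; ring
  rw [norm_exp, this, re_ofReal_mul, I_mul_re]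
  ring_nf

lemma norm_thetaHatSummand_le (k : ℕ) (τ w : ℂ) (n : ℝ) :
    ‖ThetaHatSummand k τ w n‖ ≤
      2 * ‖w - τ‖ ^ ((1 : ℝ) / 2) * |n| ^ (k + 1) * Real.exp (-π * n ^ 2 * min τ.im w.im) := by
  set c : ℂ := π * I * (w - τ)
  have hc_norm : ‖c‖ ^ ((1 : ℝ) / 2) = √π * ‖w - τ‖ ^ ((1 : ℝ) / 2) := by
    rw [norm_mul, norm_mul, norm_I, mul_one, norm_real, Real.norm_of_nonneg Real.pi_pos.le,
      Real.mul_rpow Real.pi_pos.le (norm_nonneg _), Real.sqrt_eq_rpow]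
  have hc_re : max 0 c.re = π * (τ.im - min τ.im w.im) := by
    have : c.re = π * (τ.im - w.im) := by simp [c, mul_re, mul_im]; ring
    rw [this]
    rcases le_total τ.im w.im with h | h
    · rw [min_eq_left h, sub_self, mul_zero, max_eq_left]
      nlinarith [Real.pi_pos]
    · rw [min_eq_right h, max_eq_right (by nlinarith [Real.pi_pos])]
  have hsqrt_pi : √π ≠ 0 := (Real.sqrt_pos.2 Real.pi_pos).ne'
  rw [ThetaHatSummand, norm_mul, norm_mul, norm_exp_pi_I_mul_sq_mul, norm_pow, norm_real,
    Real.norm_eq_abs]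
  calc |n| ^ k * ‖cerf (-I * c ^ ((1 : ℂ) / 2) * n)‖ * Real.exp (-π * n ^ 2 * τ.im)
      ≤ |n| ^ k * (2 / √π * ‖c‖ ^ ((1 : ℝ) / 2) * |n| * Real.exp (n ^ 2 * max 0 c.re)) *
          Real.exp (-π * n ^ 2 * τ.im) := by
        gcongr
        exact norm_cerf_neg_I_mul_sqrt_mul_le c n
    _ = 2 * ‖w - τ‖ ^ ((1 : ℝ) / 2) * |n| ^ (k + 1) * Real.exp (-π * n ^ 2 * min τ.im w.im) := by
        have hexp : Real.exp (n ^ 2 * (π * (τ.im - min τ.im w.im))) *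
            Real.exp (-π * n ^ 2 * τ.im) = Real.exp (-π * n ^ 2 * min τ.im w.im) := by
          rw [← Real.exp_add]; ring_nf
        rw [hc_norm, hc_re, ← hexp]
        field_simp
        ring

lemma summable_abs_pow_mul_exp_neg_mul_sq_affine {a c : ℝ} (ha : a ≠ 0) (hc : 0 < c) (μ : ℝ)
    (k : ℕ) : Summable fun m : ℤ => |a * m + μ| ^ k * Real.exp (-π * (a * m + μ) ^ 2 * c) := by
  have hmajorant := (summable_pow_mul_jacobiTheta₂_term_bound (c * |a| * |μ|)
    (T := c * a ^ 2) (by positivity) k).mul_left ((|a| + |μ|) ^ k)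
  simp only [Int.cast_abs] at hmajorant
  refine hmajorant.of_norm_bounded_eventually ?_
  filter_upwards [(Set.finite_singleton (0 : ℤ)).eventually_cofinite_notMem] with m hm
  have hm1 : 1 ≤ |(m : ℝ)| := by exact_mod_cast Int.one_le_abs (by simpa using hm)
  have hlin : |a * m + μ| ≤ (|a| + |μ|) * |(m : ℝ)| := by
    calc |a * m + μ| ≤ |a| * |(m : ℝ)| + |μ| := by rw [← abs_mul]; exact abs_add_le _ _
      _ ≤ (|a| + |μ|) * |(m : ℝ)| := by nlinarith [abs_nonneg μ]
  have hcross : -(|a| * |μ| * |(m : ℝ)|) ≤ a * μ * m := by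
    simpa only [abs_mul] using neg_abs_le (a * μ * m)
  have hexp : -π * (a * m + μ) ^ 2 * c ≤
      -π * (c * a ^ 2 * m ^ 2 - 2 * (c * |a| * |μ|) * |(m : ℝ)|) := by
    nlinarith [Real.pi_pos, mul_le_mul_of_nonneg_left hcross (mul_nonneg Real.pi_pos.le hc.le),
      mul_nonneg (mul_nonneg Real.pi_pos.le hc.le) (sq_nonneg μ)]
  rw [Real.norm_of_nonneg (by positivity)]
  calc |a * m + μ| ^ k * Real.exp (-π * (a * m + μ) ^ 2 * c)
      ≤ ((|a| + |μ|) * |(m : ℝ)|) ^ k *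
          Real.exp (-π * (c * a ^ 2 * m ^ 2 - 2 * (c * |a| * |μ|) * |(m : ℝ)|)) := by
        gcongr
    _ = (|a| + |μ|) ^ k * (|(m : ℝ)| ^ k *
          Real.exp (-π * (c * a ^ 2 * m ^ 2 - 2 * (c * |a| * |μ|) * |(m : ℝ)|))) := by
        rw [mul_pow, mul_assoc]

theorem thetaHat_summand_bound_and_summable (M : ℕ) (hM : 0 < M) (μ : ℝ) (k : ℕ)
    (τ w : ℂ) (hτ : 0 < τ.im) (hw : 0 < w.im) :
    (∀ n : ℝ, 0 < n →
      ‖ThetaHatSummand k τ w n‖ ≤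
        2 * ‖w - τ‖ ^ ((1 : ℝ) / 2) * n ^ (k + 1) *
          Real.exp (-Real.pi * n ^ 2 * min τ.im w.im)) ∧
    Summable (fun n : ℤ => ‖ThetaHatSummand k τ w (Real.sqrt M * n + μ)‖) := by
  have hbound := norm_thetaHatSummand_le k τ w
  refine ⟨fun n hn => by simpa only [abs_of_pos hn] using hbound n, ?_⟩
  have hsqrtM : Real.sqrt M ≠ 0 := (Real.sqrt_pos.2 (by exact_mod_cast hM)).ne'
  have hmajorant := (summable_abs_pow_mul_exp_neg_mul_sq_affine hsqrtM (lt_min hτ hw) μ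
    (k + 1)).mul_left (2 * ‖w - τ‖ ^ ((1 : ℝ) / 2))
  refine hmajorant.of_nonneg_of_le (fun _ => norm_nonneg _) fun m => ?_
  simpa only [mul_assoc] using hbound _
end

section
/- Assume Re(τ) ≠ Re(w) for τ, w ∈ ℍ. For k ≥ 0, the bivariate false theta function Θ̂_{k,μ}(τ,w) = Σ_{n ∈ L+μ} n^k erf(−i√(πi(w−τ)) n) e^{πi n² τ} admits the integral expression Θ̂_{k,μ}(τ,w) = −i·sgn(Re(w−τ)) ∫_τ^w θ_{k+1,μ}(z) / √(−i(z−τ)) dz, where the integration path is the line segment from τ to w. -/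
/-! Expanding `erf` by its defining integral, the `n`-th summand of `Θ̂` becomes
`(2/√π) (-i √(πi(w-τ))) ∫₀¹ n^(k+1) e^(πi n² (τ + s²(w-τ))) ds`. On the segment the imaginary
part stays above `min (Im τ) (Im w) > 0`, so the Gaussian bound makes the sum over `n` dominated
and it passes under the integral, producing `∫₀¹ θ_{k+1,μ}(τ + s²(w-τ)) ds`. On the other side,
the substitution `t = s²` removes the singularity of `1/√(-i t (w-τ))` and yields the same
integral times `2(w-τ)/√(-i(w-τ))`. The two constants agree by the branch identity
`√(iu) = sgn(Re u) · i · √(-iu)`, valid for `Re u ≠ 0`. -/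

open Complex MeasureTheory

/-- The theta function `θ_{k,μ}(τ) = ∑_{n ∈ √M ℤ + μ} n^k e^{π i n² τ}`. -/
noncomputable def theta (M : ℕ) (k : ℕ) (μ : ℝ) (τ : ℂ) : ℂ :=
  ∑' n : ℤ, ((Real.sqrt M * n + μ : ℝ) : ℂ) ^ k *
    Complex.exp (Real.pi * Complex.I * ((Real.sqrt M * n + μ : ℝ) : ℂ) ^ 2 * τ)

/-- The bivariate (false) theta function `Θ̂_{k,μ}(τ,w)`. -/
noncomputable def ThetaHat (M : ℕ) (k : ℕ) (μ : ℝ) (τ w : ℂ) : ℂ :=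
  ∑' n : ℤ, ((Real.sqrt M * n + μ : ℝ) : ℂ) ^ k *
    cerf (-Complex.I * (Real.pi * Complex.I * (w - τ)) ^ ((1 : ℂ) / 2) *
      ((Real.sqrt M * n + μ : ℝ) : ℂ)) *
    Complex.exp (Real.pi * Complex.I * ((Real.sqrt M * n + μ : ℝ) : ℂ) ^ 2 * τ)

open scoped Real

lemma ofReal_mul_cpow {r : ℝ} (hr : 0 < r) (z s : ℂ) : ((r : ℂ) * z) ^ s = (r : ℂ) ^ s * z ^ s := by
  have hr' : (r : ℂ) ≠ 0 := ofReal_ne_zero.2 hr.ne'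
  rcases eq_or_ne z 0 with rfl | hz
  · rcases eq_or_ne s 0 with rfl | hs <;> simp [*]
  rw [cpow_def_of_ne_zero (mul_ne_zero hr' hz), log_ofReal_mul hr hz, ofReal_log hr.le, add_mul,
    exp_add, ← cpow_def_of_ne_zero hr', ← cpow_def_of_ne_zero hz]

lemma ofReal_cpow_half {r : ℝ} (hr : 0 ≤ r) : (r : ℂ) ^ (1 / 2 : ℂ) = (√r : ℝ) := by
  rw [Real.sqrt_eq_rpow, ofReal_cpow hr]
  norm_num

lemma cpow_half_mul_self (z : ℂ) : z ^ (1 / 2 : ℂ) * z ^ (1 / 2 : ℂ) = z := by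
  rw [← sq, one_div, cpow_ofNat_inv_pow]

lemma I_mul_cpow_half_of_re_pos {u : ℂ} (hu : 0 < u.re) :
    (I * u) ^ (1 / 2 : ℂ) = I * (-I * u) ^ (1 / 2 : ℂ) := by
  have hu0 : u ≠ 0 := by rintro rfl; simp at hu
  have harg : arg (-I * u) < 0 := arg_neg_iff.2 (by simpa using hu)
  have hlog : log (I * u) = π * I + log (-I * u) := by
    rw [show I * u = -1 * (-I * u) by ring, log_mul (by norm_num) (by simpa using hu0), log_neg_one]
    rw [arg_neg_one]
    constructor <;> linarith [neg_pi_lt_arg (-I * u), Real.pi_pos]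
  rw [cpow_def_of_ne_zero (by simpa using hu0), cpow_def_of_ne_zero (by simpa using hu0), hlog,
    add_mul, exp_add, show (π : ℂ) * I * (1 / 2) = (π / 2 : ℝ) * I by push_cast; ring,
    exp_mul_I, ← ofReal_cos, ← ofReal_sin, Real.cos_pi_div_two, Real.sin_pi_div_two]
  simp

lemma I_mul_cpow_half {u : ℂ} (hu : u.re ≠ 0) :
    (I * u) ^ (1 / 2 : ℂ) = Real.sign u.re * I * (-I * u) ^ (1 / 2 : ℂ) := by
  rcases hu.lt_or_gt with hneg | hpos
  · have h := I_mul_cpow_half_of_re_pos (u := -u) (by simpa using hneg)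
    rw [show I * -u = -I * u by ring, show -I * -u = I * u by ring] at h
    rw [Real.sign_of_neg hneg, h]
    push_cast
    linear_combination (I * u) ^ (1 / 2 : ℂ) * I_mul_I
  · rw [Real.sign_of_pos hpos, I_mul_cpow_half_of_re_pos hpos]
    push_cast
    ring

lemma norm_ofReal_pow_mul_cexp_le (j : ℕ) (x : ℝ) {m : ℝ} {z : ℂ} (hz : m ≤ z.im) :
    ‖(x : ℂ) ^ j * cexp (π * I * x ^ 2 * z)‖ ≤ |x| ^ j * rexp (-π * x ^ 2 * m) := by
  rw [norm_mul, norm_pow, norm_real, Real.norm_eq_abs, norm_exp,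
    show (π * I * x ^ 2 * z : ℂ) = (π * x ^ 2 : ℝ) * (I * z) by push_cast; ring, re_ofReal_mul,
    I_mul_re]
  refine mul_le_mul_of_nonneg_left (Real.exp_le_exp.2 ?_) (by positivity)
  linarith [mul_le_mul_of_nonneg_left hz (by positivity : 0 ≤ π * x ^ 2)]

lemma summable_abs_pow_mul_exp_neg_sq (j : ℕ) {r : ℝ} (hr : 0 < r) (μ : ℝ) {m : ℝ} (hm : 0 < m) :
    Summable fun n : ℤ => |r * n + μ| ^ j * rexp (-π * (r * n + μ) ^ 2 * m) := by
  refine ((HurwitzKernelBounds.summable_f_int j (μ / r) (t := r ^ 2 * m) (by positivity)).mul_left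
    (r ^ j)).congr fun n => ?_
  rw [HurwitzKernelBounds.f_int, show r * n + μ = r * (n + μ / r) by field_simp, abs_mul,
    abs_of_pos hr, mul_pow, mul_pow, ← mul_assoc]
  congr 2
  ring

lemma hasSum_intervalIntegral_ofReal_pow_mul_cexp {ι : Type*} [Countable ι] (x : ι → ℝ) (j : ℕ)
    {m : ℝ} (hx : Summable fun n => |x n| ^ j * rexp (-π * x n ^ 2 * m))
    {γ : ℝ → ℂ} (hγ : Continuous γ) {a b : ℝ} (hγm : ∀ s ∈ Set.uIoc a b, m ≤ (γ s).im) :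
    HasSum (fun n => ∫ s in a..b, (x n : ℂ) ^ j * cexp (π * I * x n ^ 2 * γ s))
      (∫ s in a..b, ∑' n, (x n : ℂ) ^ j * cexp (π * I * x n ^ 2 * γ s)) := by
  have hbound n s (hs : s ∈ Set.uIoc a b) := norm_ofReal_pow_mul_cexp_le j (x n) (hγm s hs)
  refine intervalIntegral.hasSum_integral_of_dominated_convergence
    (fun n _ => |x n| ^ j * rexp (-π * x n ^ 2 * m))
    (fun n => (by fun_prop : Continuous _).aestronglyMeasurable)
    (fun n => ae_of_all _ (hbound n)) (ae_of_all _ fun _ _ => hx) intervalIntegrable_const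
    (ae_of_all _ fun s hs => (hx.of_norm_bounded (hbound · s hs)).hasSum)

lemma ofReal_pow_mul_cerf_mul_cexp_eq_integral (j : ℕ) (x : ℝ) (τ u : ℂ) :
    (x : ℂ) ^ j * cerf (-I * (π * I * u) ^ (1 / 2 : ℂ) * x) * cexp (π * I * x ^ 2 * τ) =
      2 / √π * (-I * (π * I * u) ^ (1 / 2 : ℂ)) *
        ∫ s in (0 : ℝ)..1, (x : ℂ) ^ (j + 1) * cexp (π * I * x ^ 2 * (τ + s ^ 2 * u)) := by
  have hsq := cpow_half_mul_self (π * I * u)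
  have hexp (s : ℝ) : (x : ℂ) ^ (j + 1) * cexp (π * I * x ^ 2 * (τ + s ^ 2 * u)) =
      (x : ℂ) ^ (j + 1) * cexp (π * I * x ^ 2 * τ) *
        cexp (-(s * (-I * (π * I * u) ^ (1 / 2 : ℂ) * x)) ^ 2) := by
    rw [mul_assoc ((x : ℂ) ^ (j + 1)), ← exp_add]
    congr 2
    linear_combination ((s : ℂ) ^ 2 * x ^ 2 * ((π * I * u) ^ (1 / 2 : ℂ)) ^ 2) * I_mul_I
      - (s : ℂ) ^ 2 * x ^ 2 * hsq
  simp_rw [hexp, intervalIntegral.integral_const_mul, cerf]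
  ring

lemma integral_div_cpow_half_eq_integral_comp_sq (F : ℂ → ℂ) (τ u : ℂ) :
    ∫ t in (0 : ℝ)..1, F (τ + t * u) / (-I * (t * u)) ^ (1 / 2 : ℂ) * u =
      2 * u / (-I * u) ^ (1 / 2 : ℂ) * ∫ s in (0 : ℝ)..1, F (τ + s ^ 2 * u) := by
  have hsubst := intervalIntegral.integral_deriv_smul_comp_of_deriv_nonneg (a := 0) (b := 1)
    (f := fun s : ℝ => s ^ 2) (f' := fun s => 2 * s)
    (g := fun t : ℝ => F (τ + t * u) / (-I * (t * u)) ^ (1 / 2 : ℂ) * u)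
    (by fun_prop) (fun s _ => by simpa using hasDerivAt_pow 2 s)
    (fun s hs => by rw [min_eq_left zero_le_one] at hs; linarith [hs.1])
  simp only [Function.comp_def, ne_eq, OfNat.ofNat_ne_zero, not_false_eq_true, zero_pow,
    one_pow] at hsubst
  rw [← hsubst, ← intervalIntegral.integral_const_mul]
  refine intervalIntegral.integral_congr_ae (ae_of_all _ fun s hs => ?_)
  rw [Set.uIoc_of_le zero_le_one] at hs
  have hroot : (-I * (((s ^ 2 : ℝ) : ℂ) * u)) ^ (1 / 2 : ℂ) = s * (-I * u) ^ (1 / 2 : ℂ) := by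
    rw [show -I * (((s ^ 2 : ℝ) : ℂ) * u) = ((s ^ 2 : ℝ) : ℂ) * (-I * u) by ring,
      ofReal_mul_cpow (pow_pos hs.1 2), ofReal_cpow_half (sq_nonneg s), Real.sqrt_sq hs.1.le]
  rw [hroot, real_smul, ofReal_mul, ofReal_ofNat, ofReal_pow]
  rcases eq_or_ne ((-I * u) ^ (1 / 2 : ℂ)) 0 with hQ | hQ
  · rw [hQ]
    simp
  have hs : (s : ℂ) ≠ 0 := by exact_mod_cast hs.1.ne'
  field_simp

lemma two_div_sqrt_pi_mul_cpow_half_eq {u : ℂ} (hu : u.re ≠ 0) :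
    2 / √π * (-I * (π * I * u) ^ (1 / 2 : ℂ)) =
      -I * Real.sign u.re * (2 * u / (-I * u) ^ (1 / 2 : ℂ)) := by
  have hu0 : u ≠ 0 := by rintro rfl; simp at hu
  have hQ : (-I * u) ^ (1 / 2 : ℂ) ≠ 0 :=
    (cpow_ne_zero_iff_of_exponent_ne_zero (by norm_num)).2 (mul_ne_zero (by simp) hu0)
  have hQQ := cpow_half_mul_self (-I * u)
  have hπ : (√π : ℂ) ≠ 0 := by exact_mod_cast (Real.sqrt_pos.2 Real.pi_pos).ne'
  rw [show (π : ℂ) * I * u = (π : ℝ) * (I * u) by ring, ofReal_mul_cpow Real.pi_pos,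
    ofReal_cpow_half Real.pi_pos.le, I_mul_cpow_half hu]
  have hu' : 2 * u / (-I * u) ^ (1 / 2 : ℂ) = 2 * I * (-I * u) ^ (1 / 2 : ℂ) := by
    rw [div_eq_iff hQ]
    linear_combination (2 * u) * I_mul_I - 2 * I * hQQ
  rw [hu']
  field_simp

lemma min_im_le_im_add_mul_sub (τ w : ℂ) {t : ℝ} (ht₀ : 0 ≤ t) (ht₁ : t ≤ 1) :
    min τ.im w.im ≤ (τ + t * (w - τ)).im := by
  have : (τ + t * (w - τ)).im = (1 - t) * τ.im + t * w.im := by simp; ring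
  rw [this]
  nlinarith [mul_le_mul_of_nonneg_left (min_le_left τ.im w.im) (sub_nonneg.2 ht₁),
    mul_le_mul_of_nonneg_left (min_le_right τ.im w.im) ht₀]

theorem thetaHat_integral_expression (M : ℕ) (hM : 0 < M) (μ : ℝ) (k : ℕ)
    (τ w : ℂ) (hτ : 0 < τ.im) (hw : 0 < w.im) (hre : τ.re ≠ w.re) :
    ThetaHat M k μ τ w =
      -Complex.I * (Real.sign ((w - τ).re) : ℂ) *
        ∫ t in (0 : ℝ)..1,
          theta M (k + 1) μ (τ + (t : ℂ) * (w - τ)) /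
              (-Complex.I * ((τ + (t : ℂ) * (w - τ)) - τ)) ^ ((1 : ℂ) / 2) * (w - τ) := by
  set u := w - τ with hu_def
  have hu : u.re ≠ 0 := by rw [hu_def, sub_re, sub_ne_zero]; exact hre.symm
  have hθ := hasSum_intervalIntegral_ofReal_pow_mul_cexp (fun n : ℤ => √M * n + μ) (k + 1)
    (summable_abs_pow_mul_exp_neg_sq (k + 1) (Real.sqrt_pos.2 (Nat.cast_pos.2 hM)) μ
      (lt_min hτ hw)) (γ := fun s => τ + s ^ 2 * u) (by fun_prop) (a := 0) (b := 1)
    fun s hs => by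
      rw [Set.uIoc_of_le zero_le_one] at hs
      show min τ.im w.im ≤ (τ + (s : ℂ) ^ 2 * (w - τ)).im
      exact_mod_cast min_im_le_im_add_mul_sub τ w (sq_nonneg s) (pow_le_one₀ hs.1.le hs.2)
  calc ThetaHat M k μ τ w
      = ∑' n : ℤ, 2 / √π * (-I * (π * I * u) ^ (1 / 2 : ℂ)) *
          ∫ s in (0 : ℝ)..1, ((√M * n + μ : ℝ) : ℂ) ^ (k + 1) *
            cexp (π * I * ((√M * n + μ : ℝ) : ℂ) ^ 2 * (τ + s ^ 2 * u)) :=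
        tsum_congr fun n => ofReal_pow_mul_cerf_mul_cexp_eq_integral k _ τ u
    _ = 2 / √π * (-I * (π * I * u) ^ (1 / 2 : ℂ)) *
          ∫ s in (0 : ℝ)..1, theta M (k + 1) μ (τ + s ^ 2 * u) := by
        rw [tsum_mul_left]
        exact congrArg _ hθ.tsum_eq
    _ = _ := by
        rw [two_div_sqrt_pi_mul_cpow_half_eq hu, mul_assoc,
          ← integral_div_cpow_half_eq_integral_comp_sq]
        simp only [add_sub_cancel_left]
end
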